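/- Let F_1(x, x_1, ..., x_{N-1}) = (1/4) Σ_{1≤k≤N-1} |x - x_k| θ(x - x_k) - (Z/2) Σ_{j=1}^{N-1} |x_j| θ(x_j) + (1/4) Σ_{1≤j<k≤N-1} |x_j - x_k| θ(x_j - x_k), where θ ∈ C_0^∞(R^3) with θ = 1 on the unit ball. Define dc_1(x̂, x) = min{(1/√2)|x - x_k| : 1 ≤ k ≤ N-1}. Then for every multi-index m ∈ N_0^3 with |m| ≥ 1 and every point with dc_1 > 0, |∂_x^m e^{F_1}| ≤ C dc_1^{1 - |m|}, with C depending on m, θ, N, Z but not on the point. -/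

import Mathlib

/-- The regularized Jastrow factor `F₁` in the variable `x` and the remaining particle
coordinates `x̂ = (x_1, …, x_{N-1})` (here `Np = N - 1`). -/
noncomputable def F1 (Np : ℕ) (Z : ℝ) (θ : EuclideanSpace ℝ (Fin 3) → ℝ)
    (xhat : Fin Np → EuclideanSpace ℝ (Fin 3)) (x : EuclideanSpace ℝ (Fin 3)) : ℝ :=
  (1 / 4) * ∑ k, ‖x - xhat k‖ * θ (x - xhat k)
    - (Z / 2) * ∑ j, ‖xhat j‖ * θ (xhat j)
    + (1 / 4) * ∑ j, ∑ k,
        if j < k then ‖xhat j - xhat k‖ * θ (xhat j - xhat k) else 0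

/-- The distance `dc₁(x̂, x) = min{(1/√2)|x - x_k| : 1 ≤ k ≤ N-1}` to the
electron-electron coalescences. -/
noncomputable def dc1 (Np : ℕ) (xhat : Fin Np → EuclideanSpace ℝ (Fin 3))
    (x : EuclideanSpace ℝ (Fin 3)) : ℝ :=
  ⨅ k : Fin Np, (Real.sqrt 2)⁻¹ * ‖x - xhat k‖


open Set Filter Topology

section aux
variable {E F : Type*} [NormedAddCommGroup E] [NormedSpace ℝ E]
  [NormedAddCommGroup F] [NormedSpace ℝ F]

lemma fderiv_comp_add_right' (f : E → F) (a x : E) :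
    fderiv ℝ (fun z => f (z + a)) x = fderiv ℝ f (x + a) := by
  by_cases h : DifferentiableAt ℝ f (x + a)
  · have h2 : HasFDerivAt (fun z : E => z + a) (ContinuousLinearMap.id ℝ E) x :=
      (hasFDerivAt_id x).add_const a
    have := (h.hasFDerivAt.comp x h2).fderiv
    simpa [Function.comp_def] using this
  · rw [fderiv_zero_of_not_differentiableAt h, fderiv_zero_of_not_differentiableAt]
    intro h'
    apply h
    have h2 : DifferentiableAt ℝ (fun z : E => z - a) (x + a) :=
      (differentiableAt_id).sub_const a
    have h3 : DifferentiableAt ℝ (fun z : E => f (z + a)) ((fun z : E => z - a) (x + a)) := by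
      simpa using h'
    have := h3.comp (x + a) h2
    simpa [Function.comp_def] using this

lemma iteratedFDeriv_comp_add_right'' (f : E → F) (a : E) (n : ℕ) :
    (iteratedFDeriv ℝ n (fun z => f (z + a)))
      = fun x => iteratedFDeriv ℝ n f (x + a) := by
  induction n with
  | zero => funext x; ext m; simp
  | succ n IH =>
    funext x
    rw [iteratedFDeriv_succ_eq_comp_left, iteratedFDeriv_succ_eq_comp_left]
    simp only [Function.comp_apply]
    congr 1
    rw [IH]
    exact fderiv_comp_add_right' _ a x

end aux

open Set Filter Topology

local notation "E" => EuclideanSpace ℝ (Fin 3)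


lemma norm_deriv_bound (a : ℕ) :
    ∃ B, 0 < B ∧ ∀ y : E, y ≠ 0 →
      ‖iteratedFDerivWithin ℝ a (fun z : E => ‖z‖) {(0:E)}ᶜ y‖ ≤ B * ‖y‖ ^ ((1:ℝ) - a) := by
  have hsOpen : IsOpen ({(0:E)}ᶜ) := isOpen_compl_singleton
  have hsU : UniqueDiffOn ℝ ({(0:E)}ᶜ) := hsOpen.uniqueDiffOn
  have hcd : ContDiffOn ℝ a (fun z : E => ‖z‖) {(0:E)}ᶜ := fun y hy =>
    (contDiffAt_norm ℝ (by simpa using hy)).contDiffWithinAt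
  have hcont : ContinuousOn (iteratedFDerivWithin ℝ a (fun z : E => ‖z‖) {(0:E)}ᶜ) {(0:E)}ᶜ :=
    hcd.continuousOn_iteratedFDerivWithin le_rfl hsU
  have hK : IsCompact (Metric.sphere (0:E) 1) := isCompact_sphere 0 1
  have hsub : Metric.sphere (0:E) 1 ⊆ {(0:E)}ᶜ := by
    intro y hy
    simp only [Metric.mem_sphere, dist_zero_right] at hy
    simp [show y ≠ 0 from by intro h; simp [h] at hy]
  obtain ⟨B0, hB0⟩ := hK.exists_bound_of_continuousOn (hcont.mono hsub)
  set B : ℝ := max B0 0 + 1 with hB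
  have hB0B : ∀ y ∈ Metric.sphere (0:E) 1,
      ‖iteratedFDerivWithin ℝ a (fun z : E => ‖z‖) {(0:E)}ᶜ y‖ ≤ B := fun y hy =>
    (hB0 y hy).trans (by simp only [hB]; linarith [le_max_left B0 (0:ℝ)])
  refine ⟨B, by positivity, ?_⟩
  intro y hy
  have hc : (0:ℝ) < ‖y‖ := norm_pos_iff.mpr hy
  set c : ℝ := ‖y‖ with hcdef
  have hcne : c⁻¹ ≠ 0 := inv_ne_zero hc.ne'
  set g : E ≃L[ℝ] E :=
    (LinearEquiv.smulOfNeZero ℝ E c⁻¹ hcne).toContinuousLinearEquiv with hgdef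
  have hgapp : ∀ z : E, g z = c⁻¹ • z := fun z => rfl
  have hgy : g y ∈ ({(0:E)}ᶜ : Set E) := by
    simp [hgapp, smul_eq_zero, hcne, hy]
  have key := g.iteratedFDerivWithin_comp_right (fun z : E => c * ‖z‖) hsU hgy a
  have hpre : g ⁻¹' ({(0:E)}ᶜ : Set E) = {(0:E)}ᶜ := by
    ext z
    simp [hgapp, smul_eq_zero, hcne]
  have hfg : (fun z : E => c * ‖z‖) ∘ g = fun z : E => ‖z‖ := by
    funext z
    simp only [Function.comp_apply, hgapp, norm_smul, norm_inv, Real.norm_eq_abs,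
      abs_of_pos hc]
    field_simp
  rw [hpre, hfg] at key
  have hsmul : (fun z : E => c * ‖z‖) = c • (fun z : E => ‖z‖) := by
    funext z; simp [smul_eq_mul]
  have hgu : g y = ‖y‖⁻¹ • y := hgapp y
  have hconst := iteratedFDerivWithin_const_smul_apply (𝕜 := ℝ) (a := c)
    (f := fun z : E => ‖z‖) (hcd (g y) hgy) hsU hgy
  rw [hsmul, hconst] at key
  have hnorm1 : ‖iteratedFDerivWithin ℝ a (fun z : E => ‖z‖) {(0:E)}ᶜ y‖
      ≤ ‖c • iteratedFDerivWithin ℝ a (fun z : E => ‖z‖) {(0:E)}ᶜ (g y)‖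
        * ∏ _i : Fin a, ‖(g : E →L[ℝ] E)‖ := by
    rw [key]
    exact ContinuousMultilinearMap.norm_compContinuousLinearMap_le _ _
  have hgnorm : ‖(g : E →L[ℝ] E)‖ ≤ c⁻¹ := by
    refine ContinuousLinearMap.opNorm_le_bound _ (by positivity) (fun z => ?_)
    have hz : (g : E →L[ℝ] E) z = c⁻¹ • z := hgapp z
    rw [hz, norm_smul, norm_inv, Real.norm_eq_abs, abs_of_pos hc]
  have hsphere : g y ∈ Metric.sphere (0:E) 1 := by
    simp only [Metric.mem_sphere, dist_zero_right, hgu, norm_smul, norm_inv,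
      Real.norm_eq_abs, abs_of_pos hc, abs_norm]
    field_simp
  have hmain : ‖iteratedFDerivWithin ℝ a (fun z : E => ‖z‖) {(0:E)}ᶜ y‖
      ≤ (c * B) * (c⁻¹) ^ a := by
    refine hnorm1.trans ?_
    have h1 : ‖c • iteratedFDerivWithin ℝ a (fun z : E => ‖z‖) {(0:E)}ᶜ (g y)‖ ≤ c * B := by
      rw [norm_smul, Real.norm_eq_abs, abs_of_pos hc]
      exact mul_le_mul_of_nonneg_left (hB0B _ hsphere) hc.le
    have h2 : (∏ _i : Fin a, ‖(g : E →L[ℝ] E)‖) ≤ (c⁻¹) ^ a := by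
      rw [Finset.prod_const, Finset.card_univ, Fintype.card_fin]
      exact pow_le_pow_left₀ (norm_nonneg _) hgnorm a
    exact mul_le_mul h1 h2 (Finset.prod_nonneg fun _ _ => norm_nonneg _) (by positivity)
  refine hmain.trans (le_of_eq ?_)
  rw [Real.rpow_sub hc, Real.rpow_one, Real.rpow_natCast, inv_pow]
  field_simp

lemma hfun_deriv_bound (θ : E → ℝ) (hsm : ContDiff ℝ (⊤ : ℕ∞) θ)
    (hcs : HasCompactSupport θ) {R : ℝ} (hR : 1 < R)
    (hsupp : tsupport θ ⊆ Metric.ball (0:E) R) (j : ℕ) (hj : 1 ≤ j) :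
    ∃ K, 0 < K ∧ ∀ y : E, y ≠ 0 →
      ‖iteratedFDerivWithin ℝ j (fun z : E => ‖z‖ * θ z) {(0:E)}ᶜ y‖
        ≤ K * ‖y‖ ^ ((1:ℝ) - j) := by
  have hsOpen : IsOpen ({(0:E)}ᶜ) := isOpen_compl_singleton
  have hsU : UniqueDiffOn ℝ ({(0:E)}ᶜ) := hsOpen.uniqueDiffOn
  -- bounds for derivatives of θ
  have hθb : ∀ b : ℕ, ∃ M, 0 < M ∧ ∀ y : E, ‖iteratedFDeriv ℝ b θ y‖ ≤ M := by
    intro b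
    obtain ⟨M, hM⟩ := (hcs.iteratedFDeriv b).exists_bound_of_continuous
      (hsm.continuous_iteratedFDeriv (by exact_mod_cast le_top))
    exact ⟨max M 0 + 1, by positivity,
      fun y => (hM y).trans (by linarith [le_max_left M (0:ℝ)])⟩
  set Mθ : ℝ := ∑ b ∈ Finset.range (j+1), (hθb b).choose with hMθ
  have hMθpos : 0 < Mθ := by
    apply Finset.sum_pos (fun b _ => (hθb b).choose_spec.1)
    exact ⟨0, Finset.mem_range.mpr (Nat.succ_pos j)⟩
  have hMθle : ∀ b ≤ j, ∀ y : E, ‖iteratedFDeriv ℝ b θ y‖ ≤ Mθ := by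
    intro b hb y
    refine ((hθb b).choose_spec.2 y).trans ?_
    exact Finset.single_le_sum (f := fun b => (hθb b).choose)
      (fun c _ => ((hθb c).choose_spec.1).le) (Finset.mem_range.mpr (Nat.lt_succ_of_le hb))
  -- bounds for derivatives of the norm
  set Bs : ℝ := ∑ a ∈ Finset.range (j+1), (norm_deriv_bound a).choose with hBs
  have hBspos : 0 < Bs := by
    apply Finset.sum_pos (fun a _ => (norm_deriv_bound a).choose_spec.1)
    exact ⟨0, Finset.mem_range.mpr (Nat.succ_pos j)⟩
  have hBsle : ∀ a ≤ j, ∀ y : E, y ≠ 0 →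
      ‖iteratedFDerivWithin ℝ a (fun z : E => ‖z‖) {(0:E)}ᶜ y‖ ≤ Bs * ‖y‖ ^ ((1:ℝ) - a) := by
    intro a ha y hy
    refine ((norm_deriv_bound a).choose_spec.2 y hy).trans ?_
    have h1 : (norm_deriv_bound a).choose ≤ Bs :=
      Finset.single_le_sum (f := fun a => (norm_deriv_bound a).choose)
        (fun c _ => ((norm_deriv_bound c).choose_spec.1).le)
        (Finset.mem_range.mpr (Nat.lt_succ_of_le ha))
    exact mul_le_mul_of_nonneg_right h1 (Real.rpow_nonneg (norm_nonneg _) _)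
  set K : ℝ := (2:ℝ) ^ j * (Bs * Mθ * R ^ (j:ℝ)) with hK
  have hKpos : 0 < K := by
    have : (0:ℝ) < R ^ (j:ℝ) := Real.rpow_pos_of_pos (by linarith) _
    positivity
  refine ⟨K, hKpos, ?_⟩
  intro y hy
  have hypos : (0:ℝ) < ‖y‖ := norm_pos_iff.mpr hy
  by_cases hyR : ‖y‖ < R
  · -- Leibniz
    have hcdn : ContDiffOn ℝ (j:ℕ) (fun z : E => ‖z‖) {(0:E)}ᶜ := fun z hz =>
      (contDiffAt_norm ℝ (by simpa using hz)).contDiffWithinAt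
    have hcdθ : ContDiffOn ℝ (j:ℕ) θ {(0:E)}ᶜ :=
      (hsm.of_le (by exact_mod_cast le_top)).contDiffOn
    have hleib := norm_iteratedFDerivWithin_mul_le (𝕜 := ℝ)
      (f := fun z : E => ‖z‖) (g := θ) hcdn hcdθ hsU (by simpa using hy) (le_refl ((j:ℕ) : WithTop ℕ∞))
    refine hleib.trans ?_
    have hterm : ∀ a ∈ Finset.range (j+1),
        (j.choose a : ℝ) * ‖iteratedFDerivWithin ℝ a (fun z : E => ‖z‖) {(0:E)}ᶜ y‖
          * ‖iteratedFDerivWithin ℝ (j-a) θ {(0:E)}ᶜ y‖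
        ≤ (j.choose a : ℝ) * (Bs * Mθ * R ^ (j:ℝ)) * ‖y‖ ^ ((1:ℝ) - j) := by
      intro a ha
      have haj : a ≤ j := Nat.lt_succ_iff.mp (Finset.mem_range.mp ha)
      have hθy : ‖iteratedFDerivWithin ℝ (j-a) θ {(0:E)}ᶜ y‖ ≤ Mθ := by
        rw [iteratedFDerivWithin_of_isOpen _ hsOpen (by simpa using hy)]
        exact hMθle (j-a) (Nat.sub_le j a) y
      have hny := hBsle a haj y hy
      have hrpow : ‖y‖ ^ ((1:ℝ) - a) ≤ R ^ (j:ℝ) * ‖y‖ ^ ((1:ℝ) - j) := by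
        have h1 : ((1:ℝ) - a) = ((j:ℝ) - a) + ((1:ℝ) - j) := by ring
        rw [h1, Real.rpow_add hypos]
        have h2 : ‖y‖ ^ ((j:ℝ) - a) ≤ R ^ ((j:ℝ) - a) :=
          Real.rpow_le_rpow (norm_nonneg _) hyR.le (by
            have : (a:ℝ) ≤ j := by exact_mod_cast haj
            linarith)
        have h3 : R ^ ((j:ℝ) - a) ≤ R ^ (j:ℝ) :=
          Real.rpow_le_rpow_of_exponent_le hR.le (by
            have : (0:ℝ) ≤ (a:ℝ) := by positivity
            linarith)
        exact mul_le_mul_of_nonneg_right (h2.trans h3) (Real.rpow_nonneg (norm_nonneg _) _)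
      calc (j.choose a : ℝ) * ‖iteratedFDerivWithin ℝ a (fun z : E => ‖z‖) {(0:E)}ᶜ y‖
          * ‖iteratedFDerivWithin ℝ (j-a) θ {(0:E)}ᶜ y‖
          ≤ (j.choose a : ℝ) * (Bs * ‖y‖ ^ ((1:ℝ) - a)) * Mθ := by
            apply mul_le_mul
            · exact mul_le_mul_of_nonneg_left hny (by positivity)
            · exact hθy
            · exact norm_nonneg _
            · positivity
        _ ≤ (j.choose a : ℝ) * (Bs * (R ^ (j:ℝ) * ‖y‖ ^ ((1:ℝ) - j))) * Mθ := by
            have := mul_le_mul_of_nonneg_left hrpow hBspos.le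
            have h4 := mul_le_mul_of_nonneg_left this
              (show (0:ℝ) ≤ (j.choose a : ℝ) by positivity)
            have h5 := mul_le_mul_of_nonneg_right h4 hMθpos.le
            convert h5 using 2 <;> ring
        _ = (j.choose a : ℝ) * (Bs * Mθ * R ^ (j:ℝ)) * ‖y‖ ^ ((1:ℝ) - j) := by ring
    refine (Finset.sum_le_sum hterm).trans ?_
    rw [← Finset.sum_mul, ← Finset.sum_mul]
    rw [hK]
    have hbin : (∑ a ∈ Finset.range (j+1), (j.choose a : ℝ)) = (2:ℝ) ^ j := by
      exact_mod_cast Nat.sum_range_choose j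
    rw [hbin]
  · -- away from the support of θ : the derivative vanishes
    push_neg at hyR
    have hyns : y ∉ tsupport θ := fun h => by
      have := hsupp h
      simp only [Metric.mem_ball, dist_zero_right] at this
      linarith
    have hVopen : IsOpen ((tsupport θ)ᶜ) := (isClosed_tsupport θ).isOpen_compl
    have hVy : (tsupport θ)ᶜ ∈ 𝓝 y := hVopen.mem_nhds hyns
    have h0 : EqOn (fun z : E => ‖z‖ * θ z) (fun _ : E => (0:ℝ))
        ({(0:E)}ᶜ ∩ (tsupport θ)ᶜ) := by
      intro z hz
      have : θ z = 0 := image_eq_zero_of_notMem_tsupport hz.2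
      simp [this]
    have hyU : y ∈ ({(0:E)}ᶜ ∩ (tsupport θ)ᶜ : Set E) := ⟨by simpa using hy, hyns⟩
    have e1 : iteratedFDerivWithin ℝ j (fun z : E => ‖z‖ * θ z) {(0:E)}ᶜ y
        = iteratedFDerivWithin ℝ j (fun z : E => ‖z‖ * θ z) ({(0:E)}ᶜ ∩ (tsupport θ)ᶜ) y :=
      (iteratedFDerivWithin_inter hVy).symm
    rw [e1, iteratedFDerivWithin_congr h0 hyU]
    rw [iteratedFDerivWithin_const_of_ne (show j ≠ 0 by omega) (0:ℝ) _, Pi.zero_apply]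
    simp only [norm_zero]
    positivity


noncomputable def cF0 (Np : ℕ) (Z : ℝ) (θ : E → ℝ) (xhat : Fin Np → E) : ℝ :=
  -((Z / 2) * ∑ j, ‖xhat j‖ * θ (xhat j)) + (1 / 4) * ∑ j, ∑ k,
      if j < k then ‖xhat j - xhat k‖ * θ (xhat j - xhat k) else 0

lemma F1_eq (Np : ℕ) (Z : ℝ) (θ : E → ℝ) (xhat : Fin Np → E) :
    F1 Np Z θ xhat = (fun z => ∑ k, (1/4 : ℝ) • (‖z - xhat k‖ * θ (z - xhat k)))
      + (fun _ => cF0 Np Z θ xhat) := by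
  funext z
  simp only [F1, cF0, Pi.add_apply, smul_eq_mul, ← Finset.mul_sum]
  ring

lemma F1_contDiffOn (Np : ℕ) (Z : ℝ) (θ : E → ℝ) (hsm : ContDiff ℝ (⊤ : ℕ∞) θ)
    (xhat : Fin Np → E) (n : ℕ) :
    ContDiffOn ℝ n (F1 Np Z θ xhat) {z : E | ∀ k, z ≠ xhat k} := by
  have hterm : ∀ k, ContDiffOn ℝ n
      (fun z : E => (1/4 : ℝ) • (‖z - xhat k‖ * θ (z - xhat k)))
      {z : E | ∀ k, z ≠ xhat k} := by
    intro k z hz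
    have h1 : ContDiffAt ℝ n (fun w : E => ‖w‖ * θ w) (z - xhat k) :=
      (contDiffAt_norm ℝ (sub_ne_zero.mpr (hz k))).mul
        (hsm.of_le (by exact_mod_cast le_top)).contDiffAt
    have h2 : ContDiffAt ℝ n (fun z : E => z - xhat k) z :=
      contDiffAt_id.sub contDiffAt_const
    exact (((h1.comp z h2).const_smul (1/4 : ℝ))).contDiffWithinAt
  have hsum : ContDiffOn ℝ n
      (fun z : E => ∑ k, (1/4 : ℝ) • (‖z - xhat k‖ * θ (z - xhat k)))
      {z : E | ∀ k, z ≠ xhat k} :=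
    ContDiffOn.sum (fun k _ => hterm k)
  rw [F1_eq]
  exact ContDiffOn.add hsum contDiffOn_const

lemma dc1_le {Np : ℕ} (hNp : 0 < Np) (xhat : Fin Np → E) (x : E) (k : Fin Np) :
    dc1 Np xhat x ≤ (Real.sqrt 2)⁻¹ * ‖x - xhat k‖ := by
  have : Nonempty (Fin Np) := Fin.pos_iff_nonempty.mp hNp
  exact ciInf_le (Set.Finite.bddBelow (Set.finite_range _)) k

lemma one_le_sqrt_two : (1:ℝ) ≤ Real.sqrt 2 := by
  nlinarith [Real.sq_sqrt (show (0:ℝ) ≤ 2 by norm_num), Real.sqrt_nonneg 2]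

lemma dc1_ne {Np : ℕ} (hNp : 0 < Np) (xhat : Fin Np → E) (x : E)
    (hd : 0 < dc1 Np xhat x) (k : Fin Np) : x ≠ xhat k := by
  intro he
  have h := dc1_le hNp xhat x k
  rw [he] at h hd
  simp at h
  linarith

lemma sqrt_two_dc1_le {Np : ℕ} (hNp : 0 < Np) (xhat : Fin Np → E) (x : E) (k : Fin Np) :
    Real.sqrt 2 * dc1 Np xhat x ≤ ‖x - xhat k‖ := by
  have h := dc1_le hNp xhat x k
  have hs : (0:ℝ) < Real.sqrt 2 := lt_of_lt_of_le one_pos one_le_sqrt_two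
  calc Real.sqrt 2 * dc1 Np xhat x ≤ Real.sqrt 2 * ((Real.sqrt 2)⁻¹ * ‖x - xhat k‖) :=
        mul_le_mul_of_nonneg_left h hs.le
    _ = ‖x - xhat k‖ := by field_simp

lemma rpow_dist_le {Np : ℕ} (hNp : 0 < Np) (xhat : Fin Np → E) (x : E)
    (hd : 0 < dc1 Np xhat x) (k : Fin Np) (j : ℕ) (hj : 1 ≤ j) :
    ‖x - xhat k‖ ^ ((1:ℝ) - j) ≤ dc1 Np xhat x ^ ((1:ℝ) - j) := by
  set d := dc1 Np xhat x with hddef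
  have hs : (0:ℝ) < Real.sqrt 2 := lt_of_lt_of_le one_pos one_le_sqrt_two
  have h1 : (0:ℝ) < Real.sqrt 2 * d := by positivity
  have h2 : Real.sqrt 2 * d ≤ ‖x - xhat k‖ := sqrt_two_dc1_le hNp xhat x k
  have hexp : (1:ℝ) - j ≤ 0 := by
    have : (1:ℝ) ≤ j := by exact_mod_cast hj
    linarith
  calc ‖x - xhat k‖ ^ ((1:ℝ) - j) ≤ (Real.sqrt 2 * d) ^ ((1:ℝ) - j) :=
        Real.rpow_le_rpow_of_nonpos h1 h2 hexp
    _ = Real.sqrt 2 ^ ((1:ℝ) - j) * d ^ ((1:ℝ) - j) :=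
        Real.mul_rpow (Real.sqrt_nonneg 2) hd.le
    _ ≤ 1 * d ^ ((1:ℝ) - j) := by
        have := Real.rpow_le_one_of_one_le_of_nonpos one_le_sqrt_two hexp
        exact mul_le_mul_of_nonneg_right this (Real.rpow_nonneg hd.le _)
    _ = d ^ ((1:ℝ) - j) := one_mul _

lemma F1_deriv_bound {Np : ℕ} (hNp : 0 < Np) (Z : ℝ) (θ : E → ℝ)
    (hsm : ContDiff ℝ (⊤ : ℕ∞) θ) {i : ℕ} {Ks : ℝ}
    (hKsb : ∀ j, 1 ≤ j → j ≤ i → ∀ y : E, y ≠ 0 →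
      ‖iteratedFDerivWithin ℝ j (fun z : E => ‖z‖ * θ z) {(0:E)}ᶜ y‖
        ≤ Ks * ‖y‖ ^ ((1:ℝ) - j)) (hKs : 0 < Ks)
    (xhat : Fin Np → E) (x : E) (hd : 0 < dc1 Np xhat x)
    (j : ℕ) (hj1 : 1 ≤ j) (hji : j ≤ i) :
    ‖iteratedFDerivWithin ℝ j (F1 Np Z θ xhat) {z : E | ∀ k, z ≠ xhat k} x‖
      ≤ ((Np : ℝ) * Ks / 4) * dc1 Np xhat x ^ ((1:ℝ) - j) := by
  set U : Set E := {z : E | ∀ k, z ≠ xhat k} with hUdef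
  have hUopen : IsOpen U := by
    have hU2 : U = ⋂ k, ({xhat k}ᶜ : Set E) := by
      ext z; simp [hUdef, Set.mem_iInter]
    rw [hU2]
    exact isOpen_iInter_of_finite fun k => isOpen_compl_singleton
  have hUuniq : UniqueDiffOn ℝ U := hUopen.uniqueDiffOn
  have hxU : x ∈ U := fun k => dc1_ne hNp xhat x hd k
  have hterm_cd : ∀ k, ContDiffOn ℝ j
      (fun z : E => (1/4 : ℝ) • (‖z - xhat k‖ * θ (z - xhat k))) U := by
    intro k z hz
    have h1 : ContDiffAt ℝ j (fun w : E => ‖w‖ * θ w) (z - xhat k) :=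
      (contDiffAt_norm ℝ (sub_ne_zero.mpr (hz k))).mul (hsm.of_le (by exact_mod_cast le_top)).contDiffAt
    have h2 : ContDiffAt ℝ j (fun z : E => z - xhat k) z :=
      contDiffAt_id.sub contDiffAt_const
    exact ((h1.comp z h2).const_smul (1/4 : ℝ)).contDiffWithinAt
  have hsum_cd : ContDiffOn ℝ j
      (fun z : E => ∑ k, (1/4 : ℝ) • (‖z - xhat k‖ * θ (z - xhat k))) U :=
    ContDiffOn.sum (fun k _ => hterm_cd k)
  have step1 : iteratedFDerivWithin ℝ j (F1 Np Z θ xhat) U x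
      = ∑ k, iteratedFDerivWithin ℝ j
          (fun z : E => (1/4 : ℝ) • (‖z - xhat k‖ * θ (z - xhat k))) U x := by
    rw [F1_eq]
    rw [iteratedFDerivWithin_add_apply (hsum_cd x hxU) contDiffWithinAt_const hUuniq hxU]
    rw [iteratedFDerivWithin_const_of_ne (n := j) (by omega) _ U, Pi.zero_apply, add_zero]
    exact iteratedFDerivWithin_fun_sum_apply hUuniq hxU (fun k _ => hterm_cd k x hxU)
  have hinner_cd : ∀ k, ContDiffOn ℝ j
      (fun z : E => ‖z - xhat k‖ * θ (z - xhat k)) U := by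
    intro k z hz
    have h1 : ContDiffAt ℝ j (fun w : E => ‖w‖ * θ w) (z - xhat k) :=
      (contDiffAt_norm ℝ (sub_ne_zero.mpr (hz k))).mul (hsm.of_le (by exact_mod_cast le_top)).contDiffAt
    have h2 : ContDiffAt ℝ j (fun z : E => z - xhat k) z :=
      contDiffAt_id.sub contDiffAt_const
    exact (h1.comp z h2).contDiffWithinAt
  have hksingle : ∀ k : Fin Np,
      ‖iteratedFDerivWithin ℝ j
        (fun z : E => (1/4 : ℝ) • (‖z - xhat k‖ * θ (z - xhat k))) U x‖
        ≤ (Ks / 4) * dc1 Np xhat x ^ ((1:ℝ) - j) := by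
    intro k
    have hsmul : (fun z : E => (1/4 : ℝ) • (‖z - xhat k‖ * θ (z - xhat k)))
        = (1/4 : ℝ) • (fun z : E => ‖z - xhat k‖ * θ (z - xhat k)) := rfl
    rw [hsmul, iteratedFDerivWithin_const_smul_apply (hinner_cd k x hxU) hUuniq hxU]
    rw [norm_smul, Real.norm_eq_abs]
    have habs : |(1/4 : ℝ)| = 1/4 := by norm_num
    rw [habs]
    -- pass to the global derivative, translate, and come back to {0}ᶜ
    have hglob : iteratedFDerivWithin ℝ j
        (fun z : E => ‖z - xhat k‖ * θ (z - xhat k)) U x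
        = iteratedFDeriv ℝ j (fun z : E => ‖z - xhat k‖ * θ (z - xhat k)) x :=
      iteratedFDerivWithin_of_isOpen j hUopen hxU
    have htrans : (fun z : E => ‖z - xhat k‖ * θ (z - xhat k))
        = fun z : E => (fun w : E => ‖w‖ * θ w) (z + (-xhat k)) := by
      funext z; simp [sub_eq_add_neg]
    have hglob2 : iteratedFDeriv ℝ j
        (fun z : E => ‖z - xhat k‖ * θ (z - xhat k)) x
        = iteratedFDeriv ℝ j (fun w : E => ‖w‖ * θ w) (x - xhat k) := by
      rw [htrans, iteratedFDeriv_comp_add_right'' (fun w : E => ‖w‖ * θ w) (-xhat k) j]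
      simp [sub_eq_add_neg]
    have hne : x - xhat k ≠ 0 := sub_ne_zero.mpr (hxU k)
    have hback : iteratedFDeriv ℝ j (fun w : E => ‖w‖ * θ w) (x - xhat k)
        = iteratedFDerivWithin ℝ j (fun w : E => ‖w‖ * θ w) {(0:E)}ᶜ (x - xhat k) :=
      (iteratedFDerivWithin_of_isOpen j isOpen_compl_singleton (by simpa using hne)).symm
    rw [hglob, hglob2, hback]
    have hb := hKsb j hj1 hji (x - xhat k) hne
    have hrp := rpow_dist_le hNp xhat x hd k j hj1
    calc (1/4 : ℝ) * ‖iteratedFDerivWithin ℝ j (fun w : E => ‖w‖ * θ w) {(0:E)}ᶜ (x - xhat k)‖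
        ≤ (1/4 : ℝ) * (Ks * ‖x - xhat k‖ ^ ((1:ℝ) - j)) := by linarith
      _ ≤ (1/4 : ℝ) * (Ks * dc1 Np xhat x ^ ((1:ℝ) - j)) := by
          have := mul_le_mul_of_nonneg_left hrp hKs.le
          linarith
      _ = (Ks / 4) * dc1 Np xhat x ^ ((1:ℝ) - j) := by ring
  rw [step1]
  refine (norm_sum_le _ _).trans ?_
  calc (∑ k : Fin Np, ‖iteratedFDerivWithin ℝ j
        (fun z : E => (1/4 : ℝ) • (‖z - xhat k‖ * θ (z - xhat k))) U x‖)
      ≤ ∑ _k : Fin Np, (Ks / 4) * dc1 Np xhat x ^ ((1:ℝ) - j) :=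
        Finset.sum_le_sum (fun k _ => hksingle k)
    _ = (Np : ℝ) * ((Ks / 4) * dc1 Np xhat x ^ ((1:ℝ) - j)) := by
        rw [Finset.sum_const, Finset.card_univ, Fintype.card_fin, nsmul_eq_mul]
    _ = ((Np : ℝ) * Ks / 4) * dc1 Np xhat x ^ ((1:ℝ) - j) := by ring

/-- Derivatives of the Jastrow factor `e^{F₁}`: for `|m| ≥ 1`,
`|∂_x^m e^{F₁}| ≤ C dc₁^{1-|m|}` away from the coalescence set, with `C` independent
of the point. -/
theorem stmt12 (Np : ℕ) (hNp : 0 < Np) (Z : ℝ) (hZ : 0 < Z)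
    (θ : EuclideanSpace ℝ (Fin 3) → ℝ) (hsm : ContDiff ℝ (⊤ : ℕ∞) θ)
    (hcs : HasCompactSupport θ) (hθ1 : ∀ y : EuclideanSpace ℝ (Fin 3), ‖y‖ < 1 → θ y = 1)
    (i : ℕ) (hi : 1 ≤ i) :
    ∃ C > 0, ∀ (xhat : Fin Np → EuclideanSpace ℝ (Fin 3))
      (x : EuclideanSpace ℝ (Fin 3)), 0 < dc1 Np xhat x →
      ‖iteratedFDeriv ℝ i (fun z => Real.exp (F1 Np Z θ xhat z)) x‖
        ≤ C * dc1 Np xhat x ^ ((1 : ℝ) - i) := by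
  obtain ⟨R, hR1, hsupp⟩ := hcs.isBounded.subset_ball_lt 1 0
  -- uniform bound for the derivatives of ‖·‖θ(·)
  have hKj : ∀ j : ℕ, ∃ K, 0 < K ∧ (1 ≤ j → ∀ y : EuclideanSpace ℝ (Fin 3), y ≠ 0 →
      ‖iteratedFDerivWithin ℝ j (fun z : EuclideanSpace ℝ (Fin 3) => ‖z‖ * θ z)
        {(0:EuclideanSpace ℝ (Fin 3))}ᶜ y‖ ≤ K * ‖y‖ ^ ((1:ℝ) - j)) := by
    intro j
    by_cases hj : 1 ≤ j
    · obtain ⟨K, hK, hKb⟩ := hfun_deriv_bound θ hsm hcs hR1 hsupp j hj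
      exact ⟨K, hK, fun _ => hKb⟩
    · exact ⟨1, one_pos, fun h => absurd h hj⟩
  set Ks : ℝ := ∑ j ∈ Finset.range (i+1), (hKj j).choose with hKsdef
  have hKspos : 0 < Ks :=
    Finset.sum_pos (fun j _ => (hKj j).choose_spec.1) ⟨0, Finset.mem_range.mpr (Nat.succ_pos i)⟩
  have hKsb : ∀ j, 1 ≤ j → j ≤ i → ∀ y : EuclideanSpace ℝ (Fin 3), y ≠ 0 →
      ‖iteratedFDerivWithin ℝ j (fun z : EuclideanSpace ℝ (Fin 3) => ‖z‖ * θ z)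
        {(0:EuclideanSpace ℝ (Fin 3))}ᶜ y‖ ≤ Ks * ‖y‖ ^ ((1:ℝ) - j) := by
    intro j hj1 hji y hy
    refine ((hKj j).choose_spec.2 hj1 y hy).trans ?_
    refine mul_le_mul_of_nonneg_right ?_ (Real.rpow_nonneg (norm_nonneg _) _)
    exact Finset.single_le_sum (f := fun j => (hKj j).choose)
      (fun c _ => ((hKj c).choose_spec.1).le) (Finset.mem_range.mpr (Nat.lt_succ_of_le hji))
  set KF : ℝ := (Np : ℝ) * Ks / 4 + 1 with hKFdef
  have hKFpos : 0 < KF := by positivity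
  -- bound on |F1|
  have hhcs : HasCompactSupport (fun z : EuclideanSpace ℝ (Fin 3) => ‖z‖ * θ z) :=
    hcs.mul_left
  obtain ⟨M0, hM0⟩ := hhcs.exists_bound_of_continuous (continuous_norm.mul hsm.continuous)
  set Mh : ℝ := max M0 0 + 1 with hMhdef
  have hMhpos : 0 < Mh := by positivity
  have hMh : ∀ z : EuclideanSpace ℝ (Fin 3), |‖z‖ * θ z| ≤ Mh := by
    intro z
    have := hM0 z
    rw [Real.norm_eq_abs] at this
    linarith [le_max_left M0 (0:ℝ)]
  set Mf : ℝ := (1/4) * Np * Mh + (Z/2) * Np * Mh + (1/4) * Np * Np * Mh with hMfdef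
  have hF1b : ∀ (xhat : Fin Np → EuclideanSpace ℝ (Fin 3)) z, |F1 Np Z θ xhat z| ≤ Mf := by
    intro xhat z
    have hA : |(1/4 : ℝ) * ∑ k, ‖z - xhat k‖ * θ (z - xhat k)| ≤ (1/4) * Np * Mh := by
      rw [abs_mul]
      have h1 : |∑ k, ‖z - xhat k‖ * θ (z - xhat k)| ≤ (Np : ℝ) * Mh := by
        refine (Finset.abs_sum_le_sum_abs _ _).trans ?_
        calc (∑ k : Fin Np, |‖z - xhat k‖ * θ (z - xhat k)|) ≤ ∑ _k : Fin Np, Mh :=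
              Finset.sum_le_sum (fun k _ => hMh _)
          _ = (Np : ℝ) * Mh := by
              rw [Finset.sum_const, Finset.card_univ, Fintype.card_fin, nsmul_eq_mul]
      calc |(1/4 : ℝ)| * |∑ k, ‖z - xhat k‖ * θ (z - xhat k)|
          ≤ |(1/4 : ℝ)| * ((Np:ℝ) * Mh) := by
            refine mul_le_mul_of_nonneg_left h1 (abs_nonneg _)
        _ = (1/4) * Np * Mh := by rw [abs_of_pos]; ring; norm_num
    have hB : |(Z/2 : ℝ) * ∑ j, ‖xhat j‖ * θ (xhat j)| ≤ (Z/2) * Np * Mh := by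
      rw [abs_mul]
      have h1 : |∑ j, ‖xhat j‖ * θ (xhat j)| ≤ (Np : ℝ) * Mh := by
        refine (Finset.abs_sum_le_sum_abs _ _).trans ?_
        calc (∑ j : Fin Np, |‖xhat j‖ * θ (xhat j)|) ≤ ∑ _j : Fin Np, Mh :=
              Finset.sum_le_sum (fun k _ => hMh _)
          _ = (Np : ℝ) * Mh := by
              rw [Finset.sum_const, Finset.card_univ, Fintype.card_fin, nsmul_eq_mul]
      calc |(Z/2 : ℝ)| * |∑ j, ‖xhat j‖ * θ (xhat j)| ≤ |(Z/2 : ℝ)| * ((Np:ℝ) * Mh) :=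
            mul_le_mul_of_nonneg_left h1 (abs_nonneg _)
        _ = (Z/2) * Np * Mh := by rw [abs_of_pos (by linarith : (0:ℝ) < Z/2)]; ring
    have hC : |(1/4 : ℝ) * ∑ j, ∑ k, if j < k then ‖xhat j - xhat k‖ * θ (xhat j - xhat k) else 0|
        ≤ (1/4) * Np * Np * Mh := by
      rw [abs_mul]
      have h1 : |∑ j, ∑ k, if j < k then ‖xhat j - xhat k‖ * θ (xhat j - xhat k) else 0|
          ≤ (Np : ℝ) * ((Np : ℝ) * Mh) := by
        refine (Finset.abs_sum_le_sum_abs _ _).trans ?_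
        have hrow : ∀ j : Fin Np,
            |∑ k, if j < k then ‖xhat j - xhat k‖ * θ (xhat j - xhat k) else 0|
              ≤ (Np : ℝ) * Mh := by
          intro j
          refine (Finset.abs_sum_le_sum_abs _ _).trans ?_
          calc (∑ k : Fin Np, |if j < k then ‖xhat j - xhat k‖ * θ (xhat j - xhat k) else 0|)
              ≤ ∑ _k : Fin Np, Mh := by
                refine Finset.sum_le_sum (fun k _ => ?_)
                by_cases hjk : j < k
                · simp only [hjk, if_true]; exact hMh _
                · simp only [hjk, if_false, abs_zero]; exact hMhpos.le
            _ = (Np : ℝ) * Mh := by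
                rw [Finset.sum_const, Finset.card_univ, Fintype.card_fin, nsmul_eq_mul]
        calc (∑ j : Fin Np, |∑ k, if j < k then ‖xhat j - xhat k‖ * θ (xhat j - xhat k) else 0|)
            ≤ ∑ _j : Fin Np, (Np : ℝ) * Mh := Finset.sum_le_sum (fun j _ => hrow j)
          _ = (Np : ℝ) * ((Np : ℝ) * Mh) := by
              rw [Finset.sum_const, Finset.card_univ, Fintype.card_fin, nsmul_eq_mul]
      calc |(1/4 : ℝ)| * |∑ j, ∑ k, if j < k then ‖xhat j - xhat k‖ * θ (xhat j - xhat k) else 0|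
          ≤ |(1/4 : ℝ)| * ((Np:ℝ) * ((Np:ℝ) * Mh)) := mul_le_mul_of_nonneg_left h1 (abs_nonneg _)
        _ = (1/4) * Np * Np * Mh := by rw [abs_of_pos]; ring; norm_num
    have hsplit : |F1 Np Z θ xhat z|
        ≤ |(1/4 : ℝ) * ∑ k, ‖z - xhat k‖ * θ (z - xhat k)|
          + |(Z/2 : ℝ) * ∑ j, ‖xhat j‖ * θ (xhat j)|
          + |(1/4 : ℝ) * ∑ j, ∑ k, if j < k then ‖xhat j - xhat k‖ * θ (xhat j - xhat k) else 0| := by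
      unfold F1
      set a := (1/4 : ℝ) * ∑ k, ‖z - xhat k‖ * θ (z - xhat k)
      set b := (Z/2 : ℝ) * ∑ j, ‖xhat j‖ * θ (xhat j)
      set c := (1/4 : ℝ) * ∑ j, ∑ k, if j < k then ‖xhat j - xhat k‖ * θ (xhat j - xhat k) else 0
      calc |a - b + c| ≤ |a - b| + |c| := abs_add_le _ _
        _ ≤ |a| + |b| + |c| := by
            have := abs_sub a b
            linarith [abs_sub_abs_le_abs_sub a b, abs_sub a b]
    rw [hMfdef]
    linarith
  set Cexp : ℝ := Real.exp Mf with hCexpdef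
  have hCexppos : 0 < Cexp := Real.exp_pos _
  set A : ℝ := KF * max 1 R + 1 with hAdef
  have hA1 : 1 ≤ A := by
    have h1 : (0:ℝ) ≤ KF * max 1 R := mul_nonneg hKFpos.le (le_trans zero_le_one (le_max_left _ _))
    linarith
  have hApos : 0 < A := lt_of_lt_of_le one_pos hA1
  have hfact : (0:ℝ) < (i.factorial : ℝ) := by exact_mod_cast i.factorial_pos
  refine ⟨(i.factorial : ℝ) * Cexp * A ^ i, by positivity, ?_⟩
  intro xhat x hd
  have hxk : ∀ k, x ≠ xhat k := fun k => dc1_ne hNp xhat x hd k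
  set U : Set (EuclideanSpace ℝ (Fin 3)) := {z | ∀ k, z ≠ xhat k} with hUdef
  have hUopen : IsOpen U := by
    have hU2 : U = ⋂ k, ({xhat k}ᶜ : Set (EuclideanSpace ℝ (Fin 3))) := by
      ext z; simp [hUdef, Set.mem_iInter]
    rw [hU2]
    exact isOpen_iInter_of_finite fun k => isOpen_compl_singleton
  have hUuniq : UniqueDiffOn ℝ U := hUopen.uniqueDiffOn
  have hxU : x ∈ U := hxk
  set d : ℝ := dc1 Np xhat x with hddef
  by_cases hdR : d ≤ R
  · -- main case : Faà di Bruno bound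
    have hcdF : ContDiffOn ℝ i (F1 Np Z θ xhat) U := F1_contDiffOn Np Z θ hsm xhat i
    have hexp : ContDiff ℝ (i : ℕ) Real.exp := Real.contDiff_exp
    set e : ℝ := ((1:ℝ) - i) / i with hedef
    have hipos : (0:ℝ) < i := by exact_mod_cast hi
    have hC2 : ∀ b, b ≤ i →
        ‖iteratedFDerivWithin ℝ b Real.exp (Set.univ : Set ℝ) (F1 Np Z θ xhat x)‖ ≤ Cexp := by
      intro b _
      rw [iteratedFDerivWithin_univ, norm_iteratedFDeriv_eq_norm_iteratedDeriv,
        iteratedDeriv_eq_iterate, Real.iter_deriv_exp]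
      rw [Real.norm_eq_abs, abs_of_pos (Real.exp_pos _)]
      exact Real.exp_le_exp.mpr ((abs_le.mp (hF1b xhat x)).2)
    have hD2 : ∀ j, 1 ≤ j → j ≤ i →
        ‖iteratedFDerivWithin ℝ j (F1 Np Z θ xhat) U x‖ ≤ (A * d ^ e) ^ j := by
      intro j hj1 hji
      have hb := F1_deriv_bound hNp Z θ hsm hKsb hKspos xhat x hd j hj1 hji
      have hb2 : ‖iteratedFDerivWithin ℝ j (F1 Np Z θ xhat) U x‖ ≤ KF * d ^ ((1:ℝ) - j) := by
        refine hb.trans ?_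
        refine mul_le_mul_of_nonneg_right ?_ (Real.rpow_nonneg hd.le _)
        rw [hKFdef]; linarith
      refine hb2.trans ?_
      rw [mul_pow, ← Real.rpow_natCast (d ^ e) j, ← Real.rpow_mul hd.le]
      set δ : ℝ := 1 - (j:ℝ)/(i:ℝ) with hδdef
      have hsplitexp : ((1:ℝ) - j) = e * j + δ := by
        rw [hedef, hδdef]
        field_simp
        ring
      have hδ0 : 0 ≤ δ := by
        rw [hδdef]
        have : (j:ℝ)/(i:ℝ) ≤ 1 := by
          rw [div_le_one hipos]
          exact_mod_cast hji
        linarith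
      have hδ1 : δ ≤ 1 := by
        rw [hδdef]
        have : (0:ℝ) ≤ (j:ℝ)/(i:ℝ) := by positivity
        linarith
      have hdδ : d ^ δ ≤ max 1 R := by
        by_cases hd1 : d ≤ 1
        · exact le_trans (Real.rpow_le_one hd.le hd1 hδ0) (le_max_left _ _)
        · push_neg at hd1
          calc d ^ δ ≤ d ^ (1:ℝ) := Real.rpow_le_rpow_of_exponent_le hd1.le hδ1
            _ = d := Real.rpow_one d
            _ ≤ R := hdR
            _ ≤ max 1 R := le_max_right _ _
      calc KF * d ^ ((1:ℝ) - j) = KF * d ^ δ * d ^ (e * j) := by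
            rw [hsplitexp, Real.rpow_add hd]
            ring
        _ ≤ A * d ^ (e * j) := by
            refine mul_le_mul_of_nonneg_right ?_ (Real.rpow_nonneg hd.le _)
            calc KF * d ^ δ ≤ KF * max 1 R := mul_le_mul_of_nonneg_left hdδ hKFpos.le
              _ ≤ A := by rw [hAdef]; linarith
        _ ≤ A ^ j * d ^ (e * j) := by
            refine mul_le_mul_of_nonneg_right ?_ (Real.rpow_nonneg hd.le _)
            exact le_self_pow₀ hA1 (by omega)
    have hcomp := norm_iteratedFDerivWithin_comp_le (𝕜 := ℝ) (g := Real.exp)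
      (f := F1 Np Z θ xhat) (n := i) (s := U) (t := (Set.univ : Set ℝ))
      hexp.contDiffOn hcdF (le_refl ((i:ℕ) : WithTop ℕ∞)) uniqueDiffOn_univ hUuniq
      (Set.mapsTo_univ _ _) hxU hC2 hD2
    have hgoal : iteratedFDeriv ℝ i (fun z => Real.exp (F1 Np Z θ xhat z)) x
        = iteratedFDerivWithin ℝ i (Real.exp ∘ F1 Np Z θ xhat) U x := by
      rw [Function.comp_def]
      exact (iteratedFDerivWithin_of_isOpen i hUopen hxU).symm
    rw [hgoal]
    refine hcomp.trans ?_
    have hpow : (A * d ^ e) ^ i = A ^ i * d ^ ((1:ℝ) - i) := by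
      rw [mul_pow, ← Real.rpow_natCast (d ^ e) i, ← Real.rpow_mul hd.le]
      congr 1
      rw [hedef]
      field_simp
    rw [hpow]
    ring_nf
    exact le_refl _
  · -- far from all singularities : the function is locally constant
    push_neg at hdR
    set W : Set (EuclideanSpace ℝ (Fin 3)) :=
      ⋂ k, (fun z : EuclideanSpace ℝ (Fin 3) => ‖z - xhat k‖) ⁻¹' (Set.Ioi R) with hWdef
    have hWopen : IsOpen W :=
      isOpen_iInter_of_finite fun k =>
        ((continuous_id.sub continuous_const).norm).isOpen_preimage _ isOpen_Ioi
    have hxW : x ∈ W := by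
      rw [hWdef]
      simp only [Set.mem_iInter, Set.mem_preimage, Set.mem_Ioi]
      intro k
      have h1 := sqrt_two_dc1_le hNp xhat x k
      have h2 : d ≤ Real.sqrt 2 * d := by
        nlinarith [one_le_sqrt_two, hd.le]
      linarith
    have hEq : Set.EqOn (fun z => Real.exp (F1 Np Z θ xhat z))
        (fun _ => Real.exp (cF0 Np Z θ xhat)) W := by
      intro z hz
      have hzW : ∀ k, R < ‖z - xhat k‖ := by
        rw [hWdef] at hz
        simpa [Set.mem_iInter, Set.mem_preimage, Set.mem_Ioi] using hz
      have hval : F1 Np Z θ xhat z = cF0 Np Z θ xhat := by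
        rw [F1_eq]
        simp only [Pi.add_apply]
        have hzero : (∑ k, (1/4 : ℝ) • (‖z - xhat k‖ * θ (z - xhat k))) = 0 := by
          refine Finset.sum_eq_zero (fun k _ => ?_)
          have hnm : z - xhat k ∉ tsupport θ := by
            intro hmem
            have := hsupp hmem
            simp only [Metric.mem_ball, dist_zero_right] at this
            linarith [hzW k]
          rw [image_eq_zero_of_notMem_tsupport hnm]
          simp
        rw [hzero, zero_add]
      simp only
      rw [hval]
    rw [← iteratedFDerivWithin_of_isOpen i hWopen hxW,
      iteratedFDerivWithin_congr hEq hxW,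
      iteratedFDerivWithin_const_of_ne (n := i) (by omega) _ W, Pi.zero_apply]
    simp only [norm_zero]
    have : (0:ℝ) < d ^ ((1:ℝ) - i) := Real.rpow_pos_of_pos hd _
    positivity
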